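/- arXiv:1109.5830 — 7 statements merged into one kernel-verified Lean document; each statement's English description precedes it below -/
import Mathlib

section
/- Let V be a finite-dimensional real vector space, and let Γ : V → V be linear. Suppose J¹,…,Jᵏ : V → V are linear maps such that Jᴬ∘Γ = Jᴬ and Γ∘Jᴬ = −Jᴬ for all A, and assume that whenever Jᴬ(u) = 0 for all A, u lies in the sum of the images of the Jᴮ. Then Γ² = id. -/
/-- Pointwise linear-algebra content of the proposition: if `Jᴬ∘Γ = Jᴬ`, `Γ∘Jᴬ = −Jᴬ`
and the common kernel of the `Jᴬ` is contained in the sum of their images, then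
`Γ² = id`. -/
theorem stmt2 {V : Type*} [AddCommGroup V] [Module ℝ V] [FiniteDimensional ℝ V]
    {k : ℕ} (Γ : V →ₗ[ℝ] V) (J : Fin k → (V →ₗ[ℝ] V))
    (h1 : ∀ A, (J A) ∘ₗ Γ = J A) (h2 : ∀ A, Γ ∘ₗ (J A) = -(J A))
    (h3 : (⨅ A, LinearMap.ker (J A)) ≤ ⨆ B, LinearMap.range (J B)) :
    Γ ∘ₗ Γ = LinearMap.id := by
  -- On the sum of the images, Γ acts as -1.
  have key : (⨆ B, LinearMap.range (J B)) ≤ LinearMap.ker (Γ + LinearMap.id) := by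
    refine iSup_le fun B => ?_
    rintro _ ⟨y, rfl⟩
    have : Γ (J B y) = -(J B y) := by
      have := congrArg (fun f => f y) (h2 B)
      simpa using this
    simp [LinearMap.mem_ker, this]
  ext v
  -- u := Γ v - v lies in every kernel
  have hker : Γ v - v ∈ ⨅ A, LinearMap.ker (J A) := by
    simp only [Submodule.mem_iInf, LinearMap.mem_ker]
    intro A
    have := congrArg (fun f => f v) (h1 A)
    simp only [LinearMap.coe_comp, Function.comp_apply] at this
    simp [map_sub, this]
  have hmem := key (h3 hker)
  have hfin : Γ (Γ v) = v := by
    simpa [LinearMap.mem_ker, sub_eq_zero] using hmem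
  simpa using hfin
end

section
/- If ξ = (ξ₁,…,ξ_k) is a SOPDE on T¹_kQ that is integrable (through every point there passes an integral section), then its components satisfy the symmetry (ξ_A)ⁱ_B = (ξ_B)ⁱ_A for all A, B, i. -/
/-- The model of `T¹ₖQ` in a chart: `ℝⁿ × ℝⁿᵏ` with coordinates `(qⁱ, vⁱ_A)`. -/
abbrev TkQ (n k : ℕ) : Type := (Fin n → ℝ) × (Fin k → Fin n → ℝ)

/-- If a (smooth) SOPDE `ξ` on `T¹ₖQ` is integrable — through every point there
passes an integral section, necessarily the first prolongation of a map
`φ : ℝᵏ → ℝⁿ` — then its components satisfy `(ξ_A)ⁱ_B = (ξ_B)ⁱ_A`. -/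
theorem stmt9 (n k : ℕ) (ξ : Fin k → TkQ n k → TkQ n k)
    (hsmooth : ∀ A, ContDiff ℝ (⊤ : ℕ∞) (ξ A))
    (hsopde : ∀ A p, (ξ A p).1 = p.2 A)
    (hint : ∀ p : TkQ n k, ∃ φ : (Fin k → ℝ) → (Fin n → ℝ), ContDiff ℝ (⊤ : ℕ∞) φ ∧
      ((φ 0, fun A => fderiv ℝ φ 0 (Pi.single A 1)) : TkQ n k) = p ∧
      ∀ (A : Fin k) (t : Fin k → ℝ),
        fderiv ℝ (fun s => ((φ s, fun B => fderiv ℝ φ s (Pi.single B 1)) : TkQ n k))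
            t (Pi.single A 1)
          = ξ A (φ t, fun B => fderiv ℝ φ t (Pi.single B 1))) :
    ∀ (A B : Fin k) (p : TkQ n k), (ξ A p).2 B = (ξ B p).2 A := by
  intro A B p
  obtain ⟨φ, hφ, hp0, hODE⟩ := hint p
  -- first derivative
  have hf' : ∀ y, HasFDerivAt φ (fderiv ℝ φ y) y :=
    fun y => (hφ.differentiable (by simp) y).hasFDerivAt
  have hf'diff : ContDiff ℝ (⊤ : ℕ∞) (fderiv ℝ φ) := hφ.fderiv_right (by simp)
  set f'' := fderiv ℝ (fderiv ℝ φ) 0 with hf''def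
  have hf'' : HasFDerivAt (fderiv ℝ φ) f'' 0 :=
    (hf'diff.differentiable (by simp) 0).hasFDerivAt
  have hsym := second_derivative_symmetric hf' hf''
  -- the prolongation map
  set F : (Fin k → ℝ) → TkQ n k :=
    fun s => ((φ s, fun B => fderiv ℝ φ s (Pi.single B 1)) : TkQ n k) with hFdef
  have hFdiff : ContDiff ℝ (⊤ : ℕ∞) F := by
    apply ContDiff.prodMk hφ
    exact contDiff_pi.2 fun C => hf'diff.clm_apply contDiff_const
  have hF0 : HasFDerivAt F (fderiv ℝ F 0) 0 := (hFdiff.differentiable (by simp) 0).hasFDerivAt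
  -- key computation
  have key : ∀ C D : Fin k, (ξ C p).2 D = f'' (Pi.single C 1) (Pi.single D 1) := by
    intro C D
    have hODEC := hODE C 0
    rw [hp0] at hODEC
    rw [← hODEC]
    -- project out the (2, D) component
    set L : TkQ n k →L[ℝ] (Fin n → ℝ) :=
      (ContinuousLinearMap.proj D).comp (ContinuousLinearMap.snd ℝ (Fin n → ℝ) (Fin k → Fin n → ℝ))
        with hLdef
    have h1 : HasFDerivAt (fun s => L (F s)) (L.comp (fderiv ℝ F 0)) 0 :=
      L.hasFDerivAt.comp 0 hF0
    have h2 : HasFDerivAt (fun s => L (F s))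
        ((ContinuousLinearMap.apply ℝ (Fin n → ℝ) (Pi.single D 1)).comp f'') 0 := by
      have := (ContinuousLinearMap.apply ℝ (Fin n → ℝ) (Pi.single D 1)).hasFDerivAt.comp 0 hf''
      exact this
    have heq := h1.unique h2
    have := congrFun (congrArg DFunLike.coe heq) (Pi.single C 1)
    simpa [hLdef] using this
  rw [key A B, key B A]
  exact hsym _ _
end

section
/- Let ξ = (ξ₁,…,ξ_k) be a SOPDE on T¹_kQ with components ξ_A = vⁱ_A ∂/∂qⁱ + (ξ_A)ⁱ_B ∂/∂vⁱ_B in coordinates. Then the (1,1)-tensor field h_ξ = (1/(k+1))(id − Σ_A L_{ξ_A} Jᴬ) has local expression h_ξ = Σ_j (∂/∂q^j + (1/(k+1)) Σ_{A,i,B} (∂(ξ_A)ⁱ_B/∂v^j_A) ∂/∂vⁱ_B) ⊗ dq^j, and satisfies h_ξ² = h_ξ with kernel at each point equal to the vertical subspace spanned by the ∂/∂vⁱ_A. -/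
/-- The canonical `k`-tangent structure `Jᴬ` as a (pointwise-constant) (1,1)-tensor
field in coordinates. -/
def Jfun (n k : ℕ) (A : Fin k) : TkQ n k → TkQ n k → TkQ n k :=
  fun _ w => (0, fun B => if B = A then w.1 else 0)

/-- The pointwise value of the Lie derivative `L_X J` of a (1,1)-tensor field `J`
along a vector field `X`, characterized by `(L_X J)(Z) = [X, JZ] − J[X, Z]`; in
coordinates `(L_X J)ₚ(w) = D(q ↦ J_q w)ₚ(Xₚ) − (DX)ₚ(Jₚ w) + Jₚ((DX)ₚ w)`. -/
noncomputable def lieT (n k : ℕ) (X : TkQ n k → TkQ n k)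
    (J : TkQ n k → TkQ n k → TkQ n k) (p w : TkQ n k) : TkQ n k :=
  fderiv ℝ (fun q => J q w) p (X p) - fderiv ℝ X p (J p w) + J p (fderiv ℝ X p w)

/-- For a smooth SOPDE `ξ = (ξ₁,…,ξ_k)`, the tensor
`h_ξ = (1/(k+1))(id − Σ_A L_{ξ_A}Jᴬ)` has the local expression
`h_ξ = Σ_j (∂/∂q^j + (1/(k+1)) Σ_{A,i,B} (∂(ξ_A)ⁱ_B/∂v^j_A) ∂/∂vⁱ_B) ⊗ dq^j`,
satisfies `h_ξ² = h_ξ`, and its kernel at each point is the vertical subspace. -/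
theorem stmt13 (n k : ℕ) (ξ : Fin k → TkQ n k → TkQ n k)
    (hs : ∀ A, ContDiff ℝ (⊤ : ℕ∞) (ξ A))
    (hsopde : ∀ A p, (ξ A p).1 = p.2 A)
    (hξ : TkQ n k → TkQ n k → TkQ n k)
    (hdef : ∀ p w, hξ p w
      = (1 / (k + 1) : ℝ) • (w - ∑ A, lieT n k (ξ A) (Jfun n k A) p w)) :
    (∀ p X, hξ p X = (X.1, fun B i => (1 / (k + 1) : ℝ) *
        ∑ A, ∑ j, X.1 j *
          fderiv ℝ (fun q => (ξ A q).2 B i) p (0, Pi.single A (Pi.single j 1)))) ∧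
    (∀ p, (hξ p) ∘ (hξ p) = hξ p) ∧
    (∀ p, {X : TkQ n k | hξ p X = 0} = {X : TkQ n k | X.1 = 0}) := by
  have hk : ((k : ℝ) + 1) ≠ 0 := by positivity
  have hdiff : ∀ A p, HasFDerivAt (ξ A) (fderiv ℝ (ξ A) p) p := fun A p =>
    (((hs A).differentiable (by simp)) p).hasFDerivAt
  -- first component of the derivative
  have hfst : ∀ A p (z : TkQ n k), (fderiv ℝ (ξ A) p z).1 = z.2 A := by
    intro A p z
    have h1 : HasFDerivAt (fun q : TkQ n k => (ξ A q).1)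
        ((ContinuousLinearMap.fst ℝ (Fin n → ℝ) (Fin k → Fin n → ℝ)).comp (fderiv ℝ (ξ A) p)) p :=
      (hdiff A p).fst
    set L : TkQ n k →L[ℝ] (Fin n → ℝ) :=
      (ContinuousLinearMap.proj A).comp (ContinuousLinearMap.snd ℝ (Fin n → ℝ) (Fin k → Fin n → ℝ))
    have h3 : HasFDerivAt (fun q : TkQ n k => (ξ A q).1) L p := by
      have h2 : (fun q : TkQ n k => (ξ A q).1) = fun q => q.2 A := funext fun q => hsopde A q
      rw [h2]; exact L.hasFDerivAt
    exact DFunLike.congr_fun (h1.unique h3) z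
  -- component derivatives
  have hcomp : ∀ A (B : Fin k) (i : Fin n) p (z : TkQ n k),
      fderiv ℝ (fun q => (ξ A q).2 B i) p z = (fderiv ℝ (ξ A) p z).2 B i := by
    intro A B i p z
    set L : TkQ n k →L[ℝ] ℝ :=
      (ContinuousLinearMap.proj i).comp ((ContinuousLinearMap.proj B).comp
        (ContinuousLinearMap.snd ℝ (Fin n → ℝ) (Fin k → Fin n → ℝ)))
    have h1 : HasFDerivAt (fun q => (ξ A q).2 B i) (L.comp (fderiv ℝ (ξ A) p)) p :=
      L.hasFDerivAt.comp p (hdiff A p)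
    rw [h1.fderiv]; rfl
  -- explicit formula for lieT
  have hlie : ∀ A p (w : TkQ n k), lieT n k (ξ A) (Jfun n k A) p w =
      (-w.1, fun B i => -(fderiv ℝ (ξ A) p (0, Pi.single A w.1)).2 B i
        + (if B = A then w.2 A i else 0)) := by
    intro A p w
    have hc : (fun q : TkQ n k => Jfun n k A q w) = fun _ => Jfun n k A p w := rfl
    unfold lieT
    rw [hc, fderiv_fun_const]
    have hJ : Jfun n k A p w = ((0, Pi.single A w.1) : TkQ n k) := by
      unfold Jfun
      refine Prod.ext rfl ?_
      funext B
      simp [Pi.single_apply]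
    ext
    · simp only [Prod.fst_add, Prod.fst_sub, ContinuousLinearMap.zero_apply, Prod.fst_zero]
      rw [hJ, hfst]
      simp [Jfun, Pi.single_apply]
    · rename_i B i
      simp only [Prod.snd_add, Prod.snd_sub, ContinuousLinearMap.zero_apply, Prod.snd_zero]
      rw [hJ]
      simp only [Jfun, Pi.sub_apply, Pi.add_apply, Pi.zero_apply, zero_sub]
      rw [hfst]
      by_cases h : B = A <;> simp [h]
  -- main formula
  have hmain : ∀ p (X : TkQ n k), hξ p X = (X.1, fun B i => (1 / (k + 1) : ℝ) *
      ∑ A, ∑ j, X.1 j *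
        fderiv ℝ (fun q => (ξ A q).2 B i) p (0, Pi.single A (Pi.single j 1))) := by
    intro p X
    have hsum : ∀ A, ((0, Pi.single A X.1) : TkQ n k)
        = ∑ j, X.1 j • ((0, Pi.single A (Pi.single j 1)) : TkQ n k) := by
      intro A
      refine Prod.ext ?_ ?_
      · simp [Prod.fst_sum]
      · rw [Prod.snd_sum]
        funext B i
        simp only [Finset.sum_apply, Pi.smul_apply, Prod.smul_snd, Pi.single_apply,
          smul_eq_mul]
        by_cases h : B = A <;>
          simp [h, mul_ite, mul_one, mul_zero, Pi.single_apply, Finset.sum_ite_eq,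
            Finset.sum_ite_eq']
    have hlin : ∀ A (B : Fin k) (i : Fin n),
        (fderiv ℝ (ξ A) p (0, Pi.single A X.1)).2 B i
        = ∑ j, X.1 j * fderiv ℝ (fun q => (ξ A q).2 B i) p (0, Pi.single A (Pi.single j 1)) := by
      intro A B i
      rw [hsum A, map_sum, Prod.snd_sum, Finset.sum_apply, Finset.sum_apply]
      refine Finset.sum_congr rfl fun j _ => ?_
      rw [hcomp, map_smul]
      simp [mul_comm]
    have hSsum : (∑ A, lieT n k (ξ A) (Jfun n k A) p X)
        = (∑ _A : Fin k, (-X.1), fun B i =>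
            ∑ A, (-(fderiv ℝ (ξ A) p (0, Pi.single A X.1)).2 B i
              + (if B = A then X.2 A i else 0))) := by
      refine Prod.ext ?_ ?_
      · rw [Prod.fst_sum]
        exact Finset.sum_congr rfl fun A _ => by rw [hlie]
      · rw [Prod.snd_sum]
        funext B i
        rw [Finset.sum_apply, Finset.sum_apply]
        exact Finset.sum_congr rfl fun A _ => by rw [hlie]
    rw [hdef, hSsum]
    refine Prod.ext ?_ ?_
    · funext i
      simp only [Prod.smul_fst, Prod.fst_sub, Pi.smul_apply, Pi.sub_apply, smul_eq_mul,
        Finset.sum_apply, Pi.neg_apply, Finset.sum_const, Finset.card_univ, Fintype.card_fin,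
        nsmul_eq_mul, mul_neg, Pi.mul_apply, Pi.natCast_apply]
      field_simp
      ring
    · funext B i
      simp only [Prod.smul_snd, Prod.snd_sub, Pi.smul_apply, Pi.sub_apply, smul_eq_mul]
      rw [Finset.sum_add_distrib, Finset.sum_ite_eq Finset.univ B (fun A => X.2 A i)]
      simp only [Finset.mem_univ, if_true, Finset.sum_neg_distrib]
      have h2 : X.2 B i - (-∑ A, (fderiv ℝ (ξ A) p (0, Pi.single A X.1)).2 B i + X.2 B i)
          = ∑ A, (fderiv ℝ (ξ A) p (0, Pi.single A X.1)).2 B i := by ring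
      rw [h2]
      exact congrArg _ (Finset.sum_congr rfl fun A _ => hlin A B i)
  have hfst' : ∀ p X, (hξ p X).1 = X.1 := fun p X => by rw [hmain]
  refine ⟨hmain, ?_, ?_⟩
  · intro p
    funext X
    show hξ p (hξ p X) = hξ p X
    rw [hmain p (hξ p X), hfst' p X, hmain p X]
  · intro p
    ext X
    simp only [Set.mem_setOf_eq]
    constructor
    · intro h
      have := congrArg Prod.fst h
      rw [hfst' p X] at this
      exact this
    · intro h
      rw [hmain p X, h]
      refine Prod.ext rfl ?_
      funext B i
      simp
end

section
/- With the notation above, Σ_A L_{ξ_A}Jᴬ = −(k ∂/∂qⁱ + Σ_{A,j,B} (∂(ξ_A)^j_B/∂vⁱ_A) ∂/∂v^j_B) ⊗ dqⁱ + Σ_{i,B} (∂/∂vⁱ_B) ⊗ dvⁱ_B, where ξ_A = vⁱ_A ∂/∂qⁱ + (ξ_A)ⁱ_B ∂/∂vⁱ_B is a SOPDE on a coordinate chart of T¹_kQ. -/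
/-- For a smooth SOPDE `ξ`,
`Σ_A L_{ξ_A}Jᴬ = −(k ∂/∂qⁱ + Σ_{A,j,B} (∂(ξ_A)^j_B/∂vⁱ_A) ∂/∂v^j_B) ⊗ dqⁱ
 + Σ_{i,B} (∂/∂vⁱ_B) ⊗ dvⁱ_B`. -/
theorem stmt14 (n k : ℕ) (ξ : Fin k → TkQ n k → TkQ n k)
    (hs : ∀ A, ContDiff ℝ (⊤ : ℕ∞) (ξ A))
    (hsopde : ∀ A p, (ξ A p).1 = p.2 A) :
    ∀ (p X : TkQ n k),
      (∑ A, lieT n k (ξ A) (Jfun n k A) p X)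
        = (-(k : ℝ) • X.1, fun B j => X.2 B j - ∑ A, ∑ i, X.1 i *
            fderiv ℝ (fun q => (ξ A q).2 B j) p (0, Pi.single A (Pi.single i 1))) := by
  intro p X
  have hd : ∀ A, HasFDerivAt (ξ A) (fderiv ℝ (ξ A) p) p := fun A =>
    (((hs A).differentiable (by simp)) p).hasFDerivAt
  set D : Fin k → (TkQ n k →L[ℝ] TkQ n k) := fun A => fderiv ℝ (ξ A) p with hDdef
  -- first components of the derivative
  have hfst : ∀ A (v : TkQ n k), (D A v).1 = v.2 A := by
    intro A v
    have h1 : HasFDerivAt (fun q : TkQ n k => (ξ A q).1)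
        ((ContinuousLinearMap.fst ℝ (Fin n → ℝ) (Fin k → Fin n → ℝ)).comp (D A)) p :=
      ((ContinuousLinearMap.fst ℝ (Fin n → ℝ) (Fin k → Fin n → ℝ)).hasFDerivAt).comp p (hd A)
    have h2 : HasFDerivAt (fun q : TkQ n k => (ξ A q).1)
        ((ContinuousLinearMap.proj A).comp
          (ContinuousLinearMap.snd ℝ (Fin n → ℝ) (Fin k → Fin n → ℝ))) p := by
      have h3 := (((ContinuousLinearMap.proj A :
          (Fin k → Fin n → ℝ) →L[ℝ] (Fin n → ℝ))).comp
        (ContinuousLinearMap.snd ℝ (Fin n → ℝ) (Fin k → Fin n → ℝ))).hasFDerivAt (x := p)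
      convert h3 using 2 with q
      exact hsopde A q
    have h4 := h1.unique h2
    have h5 := DFunLike.congr_fun h4 v
    simpa using h5
  have hcomp : ∀ A B j (v : TkQ n k),
      fderiv ℝ (fun q => (ξ A q).2 B j) p v = (D A v).2 B j := by
    intro A B j v
    have h0 := ((((ContinuousLinearMap.proj j).comp ((ContinuousLinearMap.proj B).comp
          (ContinuousLinearMap.snd ℝ (Fin n → ℝ) (Fin k → Fin n → ℝ)))) :
        TkQ n k →L[ℝ] ℝ).hasFDerivAt (x := ξ A p)).comp p (hd A)
    have h1 : HasFDerivAt (fun q : TkQ n k => (ξ A q).2 B j)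
        (((ContinuousLinearMap.proj j).comp ((ContinuousLinearMap.proj B).comp
          (ContinuousLinearMap.snd ℝ (Fin n → ℝ) (Fin k → Fin n → ℝ)))).comp (D A)) p := h0
    rw [h1.fderiv]; rfl
  have hterm : ∀ A, lieT n k (ξ A) (Jfun n k A) p X
      = (0 : TkQ n k) - D A (Jfun n k A p X) + Jfun n k A p (D A X) := by
    intro A
    unfold lieT
    rw [show (fun q : TkQ n k => Jfun n k A q X) = (fun _ : TkQ n k => Jfun n k A p X)
      from rfl]
    rw [fderiv_fun_const]
    rfl
  rw [Finset.sum_congr rfl fun A _ => hterm A]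
  -- decomposition of J p X as a sum of basis vectors
  have hw : ∀ A : Fin k, (Jfun n k A p X)
      = ∑ i, X.1 i • ((0, Pi.single A (Pi.single i 1)) : TkQ n k) := by
    intro A
    refine Prod.ext ?_ ?_
    · simp [Jfun, Prod.fst_sum]
    · funext B' l
      simp only [Jfun, Prod.snd_sum, Finset.sum_apply, Prod.smul_snd, Pi.smul_apply,
        Pi.single_apply, smul_ite, smul_zero]
      by_cases h : B' = A
      · subst h
        simp only [if_pos rfl, Pi.smul_apply, smul_eq_mul, Pi.single_apply, mul_ite, mul_one, mul_zero,
          Finset.sum_ite_eq, Finset.mem_univ, if_true]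
      · simp [h]
  refine Prod.ext ?_ ?_
  · rw [Prod.fst_sum]
    have : ∀ A : Fin k, ((0 : TkQ n k) - D A (Jfun n k A p X) + Jfun n k A p (D A X)).1
        = -X.1 := by
      intro A
      have h6 : (D A (Jfun n k A p X)).1 = X.1 := by
        rw [hfst]; simp [Jfun]
      show (0 : Fin n → ℝ) - (D A (Jfun n k A p X)).1 + (Jfun n k A p (D A X)).1 = -X.1
      rw [h6]; simp [Jfun]
    rw [Finset.sum_congr rfl fun A _ => this A]
    simp [Finset.sum_const, Finset.card_univ]
    ext i
    simp [mul_comm]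
  · funext B j
    rw [Prod.snd_sum]
    simp only [Finset.sum_apply]
    have hterm2 : ∀ A : Fin k,
        ((0 : TkQ n k) - D A (Jfun n k A p X) + Jfun n k A p (D A X)).2 B j
        = -(∑ i, X.1 i *
            fderiv ℝ (fun q => (ξ A q).2 B j) p (0, Pi.single A (Pi.single i 1)))
          + (if B = A then X.2 A j else 0) := by
      intro A
      have h1 : (D A (Jfun n k A p X)).2 B j
          = ∑ i, X.1 i *
            fderiv ℝ (fun q => (ξ A q).2 B j) p (0, Pi.single A (Pi.single i 1)) := by
        rw [hw A, map_sum]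
        rw [Prod.snd_sum]
        simp only [Finset.sum_apply]
        refine Finset.sum_congr rfl fun i _ => ?_
        rw [hcomp, map_smul]
        simp [smul_eq_mul]
      have h2 : (Jfun n k A p (D A X)).2 B j = if B = A then X.2 A j else 0 := by
        simp only [Jfun]
        by_cases h : B = A
        · simp [h, hfst]
        · simp [h]
      show (0 : ℝ) - (D A (Jfun n k A p X)).2 B j + (Jfun n k A p (D A X)).2 B j = _
      rw [h1, h2, zero_sub]
    rw [Finset.sum_congr rfl fun A _ => hterm2 A]
    rw [Finset.sum_add_distrib, Finset.sum_ite_eq, Finset.sum_neg_distrib]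
    simp only [Finset.mem_univ, if_true]
    ring
end

section
/- A SOPDE ξ on T¹_kQ coincides with the SOPDE ξ_{H_ξ} associated to the horizontal map of its own induced connection if and only if its components satisfy (ξ_A)^j_B = (1/(k+1)) Σ_C (∂(ξ_C)^j_B/∂vⁱ_C) vⁱ_A for all A, B, j. -/
/-- A SOPDE `ξ` coincides with the SOPDE `ξ_{H_ξ}` associated to the horizontal map
of its own induced connection (with components
`(N_ξ)^j_{Bi} = −(1/(k+1)) Σ_A ∂(ξ_A)^j_B/∂vⁱ_A`) if and only if
`(ξ_A)^j_B = (1/(k+1)) Σ_{C,i} (∂(ξ_C)^j_B/∂vⁱ_C) vⁱ_A`. -/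
theorem stmt15 (n k : ℕ) (ξ : Fin k → TkQ n k → TkQ n k)
    (hs : ∀ A, ContDiff ℝ (⊤ : ℕ∞) (ξ A))
    (hsopde : ∀ A p, (ξ A p).1 = p.2 A)
    (Nξ : Fin n → Fin k → Fin n → TkQ n k → ℝ)
    (hNξ : ∀ j B i p, Nξ j B i p = -(1 / (k + 1) : ℝ) *
      ∑ A, fderiv ℝ (fun q => (ξ A q).2 B j) p (0, Pi.single A (Pi.single i 1))) :
    (∀ A p, ξ A p = (p.2 A, fun B j => -∑ i, p.2 A i * Nξ j B i p)) ↔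
    (∀ A B j p, (ξ A p).2 B j = (1 / (k + 1) : ℝ) *
      ∑ C, ∑ i,
        fderiv ℝ (fun q => (ξ C q).2 B j) p (0, Pi.single C (Pi.single i 1))
          * p.2 A i) := by
  have key : ∀ A B j p, (-∑ i, p.2 A i * Nξ j B i p) = (1 / (k + 1) : ℝ) *
      ∑ C, ∑ i,
        fderiv ℝ (fun q => (ξ C q).2 B j) p (0, Pi.single C (Pi.single i 1))
          * p.2 A i := by
    intro A B j p
    simp only [hNξ, neg_mul, mul_neg, Finset.sum_neg_distrib, neg_neg, Finset.mul_sum]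
    rw [Finset.sum_comm]
    apply Finset.sum_congr rfl
    intro C _
    apply Finset.sum_congr rfl
    intro i _
    ring
  constructor
  · intro h A B j p
    rw [h A p, ← key A B j p]
  · intro h A p
    ext
    · exact congrFun (hsopde A p) _
    · dsimp only
      rw [key, ← h A]
end

section
/- A nonlinear connection with components N^j_{Bi} coincides with the connection induced by its associated SOPDE ξ_H if and only if N^j_{Bi} = Σ_{A,l} v^l_A ∂N^j_{Bl}/∂vⁱ_A for all i, j, B. -/
noncomputable def coordL (n k : ℕ) (A : Fin k) (i : Fin n) : TkQ n k →L[ℝ] ℝ :=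
  (ContinuousLinearMap.proj i).comp ((ContinuousLinearMap.proj A).comp
    (ContinuousLinearMap.snd ℝ (Fin n → ℝ) (Fin k → Fin n → ℝ)))

lemma key (n k : ℕ) (N : Fin n → Fin k → Fin n → TkQ n k → ℝ)
    (hN : ∀ j B i, ContDiff ℝ (⊤ : ℕ∞) (N j B i))
    (j : Fin n) (B : Fin k) (i : Fin n) (p : TkQ n k) (A : Fin k) :
    fderiv ℝ (fun q : TkQ n k => -∑ i', q.2 A i' * N j B i' q) p
      (0, Pi.single A (Pi.single i 1)) =
    -(N j B i p + ∑ l, p.2 A l * fderiv ℝ (N j B l) p (0, Pi.single A (Pi.single i 1))) := by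
  have hdiff : ∀ i', DifferentiableAt ℝ (fun q : TkQ n k => q.2 A i' * N j B i' q) p := by
    intro i'
    exact ((coordL n k A i').differentiableAt).mul ((hN j B i').differentiable (by simp) p)
  have h1 : fderiv ℝ (fun q : TkQ n k => -∑ i', q.2 A i' * N j B i' q) p
      = -(∑ i', fderiv ℝ (fun q : TkQ n k => q.2 A i' * N j B i' q) p) := by
    rw [fderiv_fun_neg, fderiv_fun_sum (fun i' _ => hdiff i')]
  rw [h1]
  simp only [ContinuousLinearMap.neg_apply, ContinuousLinearMap.sum_apply]
  congr 1
  have h2 : ∀ i', fderiv ℝ (fun q : TkQ n k => q.2 A i' * N j B i' q) p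
      (0, Pi.single A (Pi.single i 1))
      = Pi.single (M := fun _ => ℝ) i 1 i' * N j B i' p
        + p.2 A i' * fderiv ℝ (N j B i') p (0, Pi.single A (Pi.single i 1)) := by
    intro i'
    have : fderiv ℝ (fun q : TkQ n k => q.2 A i' * N j B i' q) p
        = p.2 A i' • fderiv ℝ (N j B i') p + N j B i' p • (coordL n k A i') := by
      have := fderiv_fun_mul (𝕜 := ℝ) (c := fun q : TkQ n k => q.2 A i')
        (d := N j B i') (x := p) ((coordL n k A i').differentiableAt)
        ((hN j B i').differentiable (by simp) p)
      have hc : fderiv ℝ (fun q : TkQ n k => q.2 A i') p = coordL n k A i' :=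
        (coordL n k A i').fderiv
      rw [this, hc]
    rw [this]
    simp only [ContinuousLinearMap.add_apply, ContinuousLinearMap.smul_apply]
    have : coordL n k A i' ((0 : Fin n → ℝ), Pi.single A (Pi.single i 1)) =
        Pi.single (M := fun _ => ℝ) i 1 i' := by
      simp [coordL]
    rw [this, smul_eq_mul, smul_eq_mul]
    ring
  rw [Finset.sum_congr rfl (fun i' _ => h2 i'), Finset.sum_add_distrib]
  congr 1
  simp [Pi.single_apply, ite_mul, Finset.sum_ite_eq']

/-- A nonlinear connection with components `N^j_{Bi}` coincides with the connection
induced by its associated SOPDE `ξ_H` (where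
`(ξ_H)_A = vⁱ_A(∂/∂qⁱ − N^j_{Bi} ∂/∂v^j_B)`) if and only if
`N^j_{Bi} = Σ_{A,l} v^l_A ∂N^j_{Bl}/∂vⁱ_A`. -/
theorem stmt16 (n k : ℕ) (N : Fin n → Fin k → Fin n → TkQ n k → ℝ)
    (hN : ∀ j B i, ContDiff ℝ (⊤ : ℕ∞) (N j B i))
    (ξH : Fin k → TkQ n k → TkQ n k)
    (hξH : ∀ A p, ξH A p = (p.2 A, fun B j => -∑ i, p.2 A i * N j B i p)) :
    (∀ j B i p, N j B i p = -(1 / (k + 1) : ℝ) *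
      ∑ A, fderiv ℝ (fun q => (ξH A q).2 B j) p (0, Pi.single A (Pi.single i 1))) ↔
    (∀ j B i p, N j B i p = ∑ A, ∑ l, p.2 A l *
      fderiv ℝ (N j B l) p (0, Pi.single A (Pi.single i 1))) := by
  have hsum : ∀ (j : Fin n) (B : Fin k) (i : Fin n) (p : TkQ n k),
      (∑ A, fderiv ℝ (fun q => (ξH A q).2 B j) p (0, Pi.single A (Pi.single i 1)))
      = -((k : ℝ) * N j B i p + ∑ A, ∑ l, p.2 A l *
          fderiv ℝ (N j B l) p (0, Pi.single A (Pi.single i 1))) := by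
    intro j B i p
    have hfun : ∀ A : Fin k, (fun q => (ξH A q).2 B j)
        = fun q : TkQ n k => -∑ i', q.2 A i' * N j B i' q := by
      intro A; funext q; rw [hξH A q]
    calc (∑ A, fderiv ℝ (fun q => (ξH A q).2 B j) p (0, Pi.single A (Pi.single i 1)))
        = ∑ A, -(N j B i p + ∑ l, p.2 A l *
            fderiv ℝ (N j B l) p (0, Pi.single A (Pi.single i 1))) := by
          refine Finset.sum_congr rfl fun A _ => ?_
          rw [hfun A]; exact key n k N hN j B i p A
      _ = -((k : ℝ) * N j B i p + ∑ A, ∑ l, p.2 A l *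
            fderiv ℝ (N j B l) p (0, Pi.single A (Pi.single i 1))) := by
          simp [Finset.sum_add_distrib, Finset.sum_neg_distrib, mul_comm]
  have hk : (k : ℝ) + 1 ≠ 0 := by positivity
  constructor <;> intro h j B i p <;> have hh := h j B i p
  · rw [hsum j B i p] at hh
    set s := ∑ A, ∑ l, p.2 A l * fderiv ℝ (N j B l) p (0, Pi.single A (Pi.single i 1)) with hs
    field_simp at hh
    linarith
  · rw [hsum j B i p, ← hh]
    field_simp
end

section
/- Let L : ℝⁿ × ℝ^(nk) → ℝ be a smooth Lagrangian whose Hessian matrix (∂²L/∂vⁱ_A∂v^j_B) (an nk × nk matrix) is invertible at every point. Then a k-vector field ξ with components ξ_A = (ξ_A)ⁱ ∂/∂qⁱ + (ξ_A)ⁱ_B ∂/∂vⁱ_B satisfies Σ_A i_{ξ_A} ω_L^A = dE_L if and only if (ξ_A)ⁱ = vⁱ_A for all A, i (ξ is a SOPDE) and Σ_{A,j} (∂²L/∂q^j∂vⁱ_A) v^j_A + Σ_{A,j,B} (∂²L/∂vⁱ_A∂v^j_B)(ξ_A)^j_B = ∂L/∂qⁱ for all i. -/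
/-- The continuous linear coordinate functional `p ↦ p.2 A i` on `TkQ n k`. -/
noncomputable def coordCLM (n k : ℕ) (A : Fin k) (i : Fin n) : TkQ n k →L[ℝ] ℝ :=
  (ContinuousLinearMap.proj i).comp ((ContinuousLinearMap.proj A).comp
    (ContinuousLinearMap.snd ℝ (Fin n → ℝ) (Fin k → Fin n → ℝ)))

/-- Any continuous linear functional on `TkQ n k` is determined by its values on the
canonical basis. -/
lemma clm_decomp {n k : ℕ} (φ : TkQ n k →L[ℝ] ℝ) (Y : TkQ n k) :
    φ Y = (∑ j, Y.1 j * φ (Pi.single j 1, 0))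
      + ∑ A, ∑ i, Y.2 A i * φ (0, Pi.single A (Pi.single i 1)) := by
  have hY : Y = (∑ j, Y.1 j • ((Pi.single j 1 : Fin n → ℝ), (0 : Fin k → Fin n → ℝ)))
      + ∑ A, ∑ i, Y.2 A i • ((0 : Fin n → ℝ),
          (Pi.single A (Pi.single i 1) : Fin k → Fin n → ℝ)) := by
    refine Prod.ext ?_ ?_
    · simp only [Prod.fst_add, Prod.fst_sum, Prod.smul_fst]
      funext m
      simp [Finset.sum_apply, Pi.single_apply]
    · simp only [Prod.snd_add, Prod.snd_sum, Prod.smul_snd]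
      funext B m
      simp [Finset.sum_apply, Pi.single_apply, ite_apply]
  conv_lhs => rw [hY]
  simp only [map_add, map_sum, map_smul, smul_eq_mul]

/-- The purely algebraic identity behind the backward implication. -/
lemma key_alg (n k : ℕ) (Wq : Fin k → Fin n → Fin n → ℝ)
    (Hv : Fin k → Fin n → Fin k → Fin n → ℝ) (v : Fin k → Fin n → ℝ)
    (xi2 : Fin k → Fin k → Fin n → ℝ) (pvv : Fin k → Fin n → ℝ) (G : Fin n → ℝ)
    (Y1 : Fin n → ℝ) (Y2 : Fin k → Fin n → ℝ)
    (hEL : ∀ i, (∑ A, ∑ j, Wq A i j * v A j)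
        + (∑ A, ∑ B, ∑ j, Hv A i B j * xi2 A B j) = G i) :
    ∑ A, ((∑ i, ∑ j, Wq A i j * (v A i * Y1 j - Y1 i * v A j))
        + ∑ i, ∑ B, ∑ j, Hv A i B j * (v A i * Y2 B j - Y1 i * xi2 A B j))
    = (∑ A, ∑ i, (Y2 A i * pvv A i
          + v A i * ((∑ j, Y1 j * Wq A i j) + ∑ B, ∑ j, Y2 B j * Hv A i B j)))
      - ((∑ j, Y1 j * G j) + ∑ A, ∑ i, Y2 A i * pvv A i) := by
  simp only [← hEL, mul_sub, mul_add, Finset.mul_sum, Finset.sum_sub_distrib,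
    Finset.sum_add_distrib]
  have e1 : (∑ A, ∑ i, ∑ j, Wq A i j * (v A i * Y1 j))
      = ∑ A, ∑ i, ∑ j, v A i * (Y1 j * Wq A i j) :=
    Finset.sum_congr rfl fun A _ => Finset.sum_congr rfl fun i _ =>
      Finset.sum_congr rfl fun j _ => by ring
  have e3 : (∑ A, ∑ i, ∑ B, ∑ j, Hv A i B j * (v A i * Y2 B j))
      = ∑ A, ∑ i, ∑ B, ∑ j, v A i * (Y2 B j * Hv A i B j) :=
    Finset.sum_congr rfl fun A _ => Finset.sum_congr rfl fun i _ =>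
      Finset.sum_congr rfl fun B _ => Finset.sum_congr rfl fun j _ => by ring
  have e2 : (∑ i : Fin n, ∑ A : Fin k, ∑ j, Y1 i * (Wq A i j * v A j))
      = ∑ A, ∑ i, ∑ j, Wq A i j * (Y1 i * v A j) := by
    rw [Finset.sum_comm]
    exact Finset.sum_congr rfl fun A _ => Finset.sum_congr rfl fun i _ =>
      Finset.sum_congr rfl fun j _ => by ring
  have e4 : (∑ i : Fin n, ∑ A : Fin k, ∑ B, ∑ j, Y1 i * (Hv A i B j * xi2 A B j))
      = ∑ A, ∑ i, ∑ B, ∑ j, Hv A i B j * (Y1 i * xi2 A B j) := by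
    rw [Finset.sum_comm]
    exact Finset.sum_congr rfl fun A _ => Finset.sum_congr rfl fun i _ =>
      Finset.sum_congr rfl fun B _ => Finset.sum_congr rfl fun j _ => by ring
  rw [e1, e3, ← e2, ← e4]
  ring

/-- For a smooth regular Lagrangian `L` (invertible Hessian in the velocities,
expressed as injectivity of the Hessian as a bilinear pairing), a `k`-vector field
`ξ` satisfies `Σ_A i_{ξ_A} ω_L^A = dE_L` — with
`ω_L^A = (∂²L/∂q^j∂vⁱ_A) dqⁱ∧dq^j + (∂²L/∂v^j_B∂vⁱ_A) dqⁱ∧dv^j_B` and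
`E_L = Σ_{A,i} vⁱ_A ∂L/∂vⁱ_A − L` — if and only if `ξ` is a SOPDE
(`(ξ_A)ⁱ = vⁱ_A`) and the Euler–Lagrange-type equations
`Σ_{A,j} (∂²L/∂q^j∂vⁱ_A) v^j_A + Σ_{A,B,j} (∂²L/∂vⁱ_A∂v^j_B)(ξ_A)^j_B = ∂L/∂qⁱ`
hold. -/
theorem stmt19 (n k : ℕ) (L : TkQ n k → ℝ) (hL : ContDiff ℝ (⊤ : ℕ∞) L)
    (pv : Fin k → Fin n → TkQ n k → ℝ)
    (hpv : ∀ A i p, pv A i p = fderiv ℝ L p (0, Pi.single A (Pi.single i 1)))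
    (hreg : ∀ (p : TkQ n k) (w : Fin k → Fin n → ℝ),
      (∀ (B : Fin k) (j : Fin n),
        (∑ A, ∑ i, fderiv ℝ (pv A i) p (0, Pi.single B (Pi.single j 1)) * w A i) = 0)
      → w = 0)
    (ξ : Fin k → TkQ n k → TkQ n k)
    (E : TkQ n k → ℝ) (hE : ∀ p, E p = (∑ A, ∑ i, p.2 A i * pv A i p) - L p) :
    (∀ (p : TkQ n k) (Y : TkQ n k),
      (∑ A, ((∑ i, ∑ j, fderiv ℝ (pv A i) p (Pi.single j 1, 0) *
              ((ξ A p).1 i * Y.1 j - Y.1 i * (ξ A p).1 j))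
        + ∑ i, ∑ B, ∑ j, fderiv ℝ (pv A i) p (0, Pi.single B (Pi.single j 1)) *
              ((ξ A p).1 i * Y.2 B j - Y.1 i * (ξ A p).2 B j)))
        = fderiv ℝ E p Y) ↔
    ((∀ A p, (ξ A p).1 = p.2 A) ∧
     ∀ (p : TkQ n k) (i : Fin n),
       (∑ A, ∑ j, fderiv ℝ (pv A i) p (Pi.single j 1, 0) * p.2 A j)
         + (∑ A, ∑ B, ∑ j, fderiv ℝ (pv A i) p (0, Pi.single B (Pi.single j 1))
              * (ξ A p).2 B j)
         = fderiv ℝ L p (Pi.single i 1, 0)) := by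
  -- the momenta are smooth
  have hpvC : ∀ A i, ContDiff ℝ (⊤ : ℕ∞) (pv A i) := by
    intro A i
    have h : pv A i = fun p => fderiv ℝ L p (0, Pi.single A (Pi.single i 1)) :=
      funext (hpv A i)
    rw [h]
    exact (hL.fderiv_right (by simp)).clm_apply contDiff_const
  -- the derivative of the energy
  have hdE : ∀ p Y, fderiv ℝ E p Y =
      (∑ A, ∑ i, (Y.2 A i * pv A i p + p.2 A i * fderiv ℝ (pv A i) p Y))
        - fderiv ℝ L p Y := by
    intro p Y
    have hEf : E = fun q => (∑ A, ∑ i, q.2 A i * pv A i q) - L q := funext hE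
    have hterm : ∀ (A : Fin k) (i : Fin n),
        HasFDerivAt (fun q : TkQ n k => q.2 A i * pv A i q)
        (p.2 A i • fderiv ℝ (pv A i) p + pv A i p • coordCLM n k A i) p := by
      intro A i
      exact (coordCLM n k A i).hasFDerivAt.mul
        ((hpvC A i).differentiable (by simp) p).hasFDerivAt
    have hsum : HasFDerivAt (fun q : TkQ n k => ∑ A, ∑ i, q.2 A i * pv A i q)
        (∑ A, ∑ i, (p.2 A i • fderiv ℝ (pv A i) p + pv A i p • coordCLM n k A i)) p :=
      HasFDerivAt.fun_sum fun A _ => HasFDerivAt.fun_sum fun i _ => hterm A i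
    have hD : HasFDerivAt E
        ((∑ A, ∑ i, (p.2 A i • fderiv ℝ (pv A i) p + pv A i p • coordCLM n k A i))
          - fderiv ℝ L p) p := by
      rw [hEf]
      exact hsum.sub (hL.differentiable (by simp) p).hasFDerivAt
    rw [hD.fderiv]
    simp only [ContinuousLinearMap.sub_apply, ContinuousLinearMap.sum_apply,
      ContinuousLinearMap.add_apply, ContinuousLinearMap.smul_apply, smul_eq_mul]
    congr 1
    refine Finset.sum_congr rfl fun A _ => Finset.sum_congr rfl fun i _ => ?_
    show p.2 A i * fderiv ℝ (pv A i) p Y + pv A i p * Y.2 A i = _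
    ring
  constructor
  · intro h
    have hs : ∀ A p, (ξ A p).1 = p.2 A := by
      intro A0 p
      have key : ∀ (B : Fin k) (m : Fin n),
          (∑ A, ∑ i, fderiv ℝ (pv A i) p (0, Pi.single B (Pi.single m 1))
            * ((ξ A p).1 i - p.2 A i)) = 0 := by
        intro B m
        have h1 := h p ((0 : Fin n → ℝ), (Pi.single B (Pi.single m 1) : Fin k → Fin n → ℝ))
        rw [hdE] at h1
        rw [← hpv B m p] at h1
        simp only [Pi.zero_apply, zero_mul, mul_zero, sub_zero, zero_sub, mul_neg,
          Pi.single_apply, mul_ite, ite_mul, mul_one, one_mul, mul_zero, zero_mul,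
          Finset.sum_ite_eq', Finset.sum_ite_eq, Finset.sum_ite_irrel, Finset.mem_univ,
          if_true, ite_apply, Finset.sum_const_zero, zero_add, add_zero,
          Finset.sum_add_distrib] at h1
        simp only [mul_sub, Finset.sum_sub_distrib]
        rw [h1]
        have e : (∑ A, ∑ i, p.2 A i * fderiv ℝ (pv A i) p (0, Pi.single B (Pi.single m 1)))
            = ∑ A, ∑ i, fderiv ℝ (pv A i) p (0, Pi.single B (Pi.single m 1)) * p.2 A i :=
          Finset.sum_congr rfl fun A _ => Finset.sum_congr rfl fun i _ => mul_comm _ _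
        rw [e]
        ring
      have hw := hreg p (fun A i => (ξ A p).1 i - p.2 A i) key
      funext i
      have h0 := congrFun (congrFun hw A0) i
      simpa [sub_eq_zero] using h0
    refine ⟨hs, ?_⟩
    intro p m
    have h1 := h p ((Pi.single m 1 : Fin n → ℝ), (0 : Fin k → Fin n → ℝ))
    rw [hdE] at h1
    simp only [hs, Pi.zero_apply, zero_mul, mul_zero, sub_zero, zero_sub, mul_neg,
      Pi.single_apply, mul_ite, ite_mul, mul_one, one_mul, mul_zero, zero_mul,
      Finset.sum_ite_eq', Finset.sum_ite_eq, Finset.sum_ite_irrel, Finset.mem_univ,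
      if_true, ite_apply, Finset.sum_const_zero, zero_add, add_zero, mul_sub,
      Finset.sum_sub_distrib, Finset.sum_add_distrib, Finset.sum_neg_distrib] at h1
    have e : (∑ A, ∑ i, p.2 A i * fderiv ℝ (pv A i) p (Pi.single m 1, 0))
        = ∑ A, ∑ i, fderiv ℝ (pv A i) p (Pi.single m 1, 0) * p.2 A i :=
      Finset.sum_congr rfl fun A _ => Finset.sum_congr rfl fun i _ => mul_comm _ _
    rw [e] at h1
    linarith [h1]
  · rintro ⟨hs, hEL⟩ p Y
    rw [hdE]
    have hrw : ∀ (A : Fin k) (i : Fin n), fderiv ℝ (pv A i) p Y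
        = (∑ j, Y.1 j * fderiv ℝ (pv A i) p (Pi.single j 1, 0))
          + ∑ B, ∑ j', Y.2 B j' * fderiv ℝ (pv A i) p (0, Pi.single B (Pi.single j' 1)) :=
      fun A i => clm_decomp _ Y
    rw [clm_decomp (fderiv ℝ L p) Y]
    have hrw2 : ∀ (A : Fin k) (i : Fin n),
        fderiv ℝ L p ((0 : Fin n → ℝ), Pi.single A (Pi.single i 1)) = pv A i p :=
      fun A i => (hpv A i p).symm
    simp only [hrw, hrw2, hs]
    exact key_alg n k (fun A i j => fderiv ℝ (pv A i) p (Pi.single j 1, 0))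
      (fun A i B j => fderiv ℝ (pv A i) p (0, Pi.single B (Pi.single j 1)))
      p.2 (fun A B j => (ξ A p).2 B j) (fun A i => pv A i p)
      (fun j => fderiv ℝ L p (Pi.single j 1, 0)) Y.1 Y.2 (hEL p)
end
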